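/- arXiv:1209.1402 — 3 statements merged into one kernel-verified Lean document; each statement's English description precedes it below -/
import Mathlib

section
/- Let U ∈ ℂ^{M×r} have orthonormal columns (U^H U = I_r), let A ∈ ℂ^{r×r} be positive definite, and let B ∈ ℂ^{M×M} be any matrix such that U^H B = 0. Then det(I_M + (I_M + U A U^H)^{-1} B) = det(I_M + B). -/
open Matrix ComplexOrder

theorem stmt2 (M r : ℕ) (U : Matrix (Fin M) (Fin r) ℂ) (hU : Uᴴ * U = 1)
    (A : Matrix (Fin r) (Fin r) ℂ) (hA : A.PosDef)
    (B : Matrix (Fin M) (Fin M) ℂ) (hUB : Uᴴ * B = 0) :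
    ((1 : Matrix (Fin M) (Fin M) ℂ) + ((1 : Matrix (Fin M) (Fin M) ℂ) + U * A * Uᴴ)⁻¹ * B).det
      = ((1 : Matrix (Fin M) (Fin M) ℂ) + B).det := by
  have hpd : ((1 : Matrix (Fin M) (Fin M) ℂ) + U * A * Uᴴ).PosDef := by
    have := (hA.posSemidef.mul_mul_conjTranspose_same U)
    simpa [Matrix.mul_assoc] using Matrix.PosDef.add_posSemidef Matrix.PosDef.one this
  have h1 : ((1 : Matrix (Fin M) (Fin M) ℂ) + U * A * Uᴴ) * B = B := by
    rw [add_mul, one_mul, Matrix.mul_assoc, Matrix.mul_assoc, hUB, Matrix.mul_zero,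
      Matrix.mul_zero, add_zero]
  have h2 : ((1 : Matrix (Fin M) (Fin M) ℂ) + U * A * Uᴴ)⁻¹ * B = B := by
    conv_lhs => rw [← h1, ← Matrix.mul_assoc, Matrix.nonsing_inv_mul _ hpd.det_pos.ne'.isUnit,
      Matrix.one_mul]
  rw [h2]
end

section
/- The Lebesgue measure of the support of S(ξ) on [-1/2,1/2], where S is supported on [-D sin(θ+Δ), -D sin(θ-Δ)] ∩ [-1/2,1/2], equals min{1, D|sin(θ+Δ) - sin(θ-Δ)|} whenever 0 < D ≤ 1/2 and -π/2 ≤ θ-Δ < θ+Δ ≤ π/2. -/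
open Real MeasureTheory

theorem stmt7 (D θ Δ : ℝ) (hD : 0 < D) (hD2 : D ≤ 1/2)
    (h1 : -(π/2) ≤ θ - Δ) (h2 : θ - Δ < θ + Δ) (h3 : θ + Δ ≤ π/2) :
    volume (Set.Icc (-(D * Real.sin (θ + Δ))) (-(D * Real.sin (θ - Δ)))
        ∩ Set.Icc (-(1/2) : ℝ) (1/2))
      = ENNReal.ofReal (min 1 (D * |Real.sin (θ + Δ) - Real.sin (θ - Δ)|)) := by
  set s1 := Real.sin (θ - Δ)
  set s2 := Real.sin (θ + Δ)
  have hs : s1 < s2 := by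
    apply Real.strictMonoOn_sin ⟨h1, le_trans (le_of_lt h2) h3⟩
      ⟨le_trans h1 (le_of_lt h2), h3⟩ h2
  have hb1 : |s1| ≤ 1 := Real.abs_sin_le_one _
  have hb2 : |s2| ≤ 1 := Real.abs_sin_le_one _
  have habs1 := abs_le.mp hb1
  have habs2 := abs_le.mp hb2
  have hsub : Set.Icc (-(D * s2)) (-(D * s1)) ⊆ Set.Icc (-(1/2) : ℝ) (1/2) := by
    apply Set.Icc_subset_Icc
    · nlinarith [habs2.1, habs2.2]
    · nlinarith [habs1.1, habs1.2]
  rw [Set.inter_eq_left.mpr hsub, Real.volume_Icc]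
  have hle : D * (s2 - s1) ≤ 1 := by nlinarith [habs1.1, habs2.2]
  rw [abs_of_nonneg (by linarith : (0:ℝ) ≤ s2 - s1)]
  rw [min_eq_right hle]
  ring_nf
end

section
/- Let r_m = (1/(2Δ)) ∫_{θ-Δ}^{θ+Δ} e^{-j2πDm sin α} dα and let C be the M×M circulant matrix with first column c_0 = r_0 and c_m = r_m + r_{m-M} for 1 ≤ m ≤ M-1. Then the k-th eigenvalue of C equals λ_k(C) = -1 + (1/Δ) ∫_{θ-Δ}^{θ+Δ} cos(π ω_k(D,α)(M-1)) · sin(π ω_k(D,α) M)/sin(π ω_k(D,α)) dα, where ω_k(D,α) = D sin(α) + k/M, provided sin(π ω_k(D,α)) ≠ 0 for all α in [θ-Δ, θ+Δ]. -/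
open Real MeasureTheory BigOperators

/-! Since `m ↦ e^{-2πimk/M}` is `M`-periodic, the wrapped column `c_m = r_m + r_{m-M}` turns the
eigenvalue sum into the symmetric sum `∑_{|j|<M} r_j e^{-2πijk/M}`, and each term of it is the
average over `α` of `e^{-2πij ω}` with `ω = D sin α + k/M`. Inside the integral this leaves the
kernel `∑_{|j|<M} w^j` with `w = e^{-2πiω}` on the unit circle: its negative half is the conjugate
of its positive half, so it equals `2 Re (∑_{m<M} w^m) - 1`, and the geometric sum identity
`(∑_{m<M} w^m) sin(πω) = e^{-iπω(M-1)} sin(πωM)` gives the real part. -/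

open Finset ComplexConjugate

def twoSidedSum {E : Type*} [AddCommMonoid E] (n : ℕ) (T : ℤ → E) : E :=
  ∑ m ∈ range n, T m + ∑ m ∈ Ico 1 n, T (-m)

theorem twoSidedSum_const_mul {R : Type*} [NonUnitalNonAssocSemiring R] (n : ℕ) (C : R)
    (T : ℤ → R) : twoSidedSum n (fun j => C * T j) = C * twoSidedSum n T := by
  simp only [twoSidedSum, mul_add, mul_sum]

theorem twoSidedSum_integral {E : Type*} [NormedAddCommGroup E] [NormedSpace ℝ E] (n : ℕ)
    {a b : ℝ} {μ : Measure ℝ} (F : ℤ → ℝ → E) (hF : ∀ j, IntervalIntegrable (F j) μ a b) :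
    twoSidedSum n (fun j => ∫ x in a..b, F j x ∂μ) = ∫ x in a..b, twoSidedSum n (F · x) ∂μ := by
  have hsum (s : Finset ℕ) (g : ℕ → ℤ) :
      IntervalIntegrable (fun x => ∑ m ∈ s, F (g m) x) μ a b := by
    simpa only [← Finset.sum_apply] using IntervalIntegrable.sum s fun m _ => hF (g m)
  simp only [twoSidedSum]
  rw [intervalIntegral.integral_add (hsum _ _) (hsum _ _),
    intervalIntegral.integral_finsetSum (f := fun m : ℕ => F m) fun m _ => hF m,
    intervalIntegral.integral_finsetSum (f := fun m : ℕ => F (-m)) fun m _ => hF (-m)]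

theorem sum_Ico_sub_eq_sum_Ico_neg {E : Type*} [AddCommMonoid E] (n : ℕ) (f : ℤ → E) :
    ∑ m ∈ Ico 1 n, f ((m : ℤ) - n) = ∑ m ∈ Ico 1 n, f (-m) := by
  have hreflect := sum_Ico_reflect (fun j : ℕ => f (-j)) 1 (Nat.le_succ n)
  rw [Nat.add_sub_cancel_left, Nat.add_sub_cancel] at hreflect
  rw [← hreflect]
  refine sum_congr rfl fun m hm => ?_
  rw [Nat.cast_sub (mem_Ico.mp hm).2.le, neg_sub]

theorem sum_mul_eq_twoSidedSum_of_periodic {R : Type*} [NonAssocSemiring R] {M : ℕ} (hM : 0 < M)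
    (r : ℤ → R) (c : ℕ → R) (hc0 : c 0 = r 0)
    (hc : ∀ m : ℕ, 1 ≤ m → m ≤ M - 1 → c m = r m + r ((m : ℤ) - (M : ℤ)))
    (ζ : ℤ → R) (hζ : Function.Periodic ζ M) :
    ∑ m ∈ range M, c m * ζ m = twoSidedSum M (fun j => r j * ζ j) := by
  have hwrap : ∑ m ∈ Ico 1 M, c m * ζ m =
      ∑ m ∈ Ico 1 M, r m * ζ m + ∑ m ∈ Ico 1 M, r ((m : ℤ) - M) * ζ ((m : ℤ) - M) := by
    rw [← sum_add_distrib]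
    refine sum_congr rfl fun m hm => ?_
    rw [mem_Ico] at hm
    rw [hc m hm.1 (Nat.le_sub_one_of_lt hm.2), hζ.sub_eq, add_mul]
  rw [sum_range_eq_add_Ico _ hM, twoSidedSum, sum_range_eq_add_Ico _ hM, hc0, hwrap,
    sum_Ico_sub_eq_sum_Ico_neg M (fun j => r j * ζ j), Nat.cast_zero, add_assoc]

theorem periodic_exp_mul_div {M : ℕ} (hM : M ≠ 0) (k : ℕ) :
    Function.Periodic (fun j : ℤ => Complex.exp (-(2 * π * Complex.I * j * k / M))) M := by
  intro j
  have hM' : (M : ℂ) ≠ 0 := Nat.cast_ne_zero.mpr hM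
  dsimp only
  rw [show -(2 * π * Complex.I * ((j + M : ℤ) : ℂ) * k / M) =
      -(2 * π * Complex.I * j * k / M) + ((-k : ℤ) : ℂ) * (2 * π * Complex.I) by
    push_cast; field_simp; ring, Complex.exp_add, Complex.exp_int_mul_two_pi_mul_I, mul_one]

theorem geom_sum_exp_mul_sin (z : ℂ) (n : ℕ) :
    (∑ m ∈ range n, Complex.exp (-(2 * m * z * Complex.I))) * Complex.sin z =
      Complex.exp (-((n - 1) * z * Complex.I)) * Complex.sin (n * z) := by
  have hpow : ∀ m : ℕ, Complex.exp (-(2 * m * z * Complex.I)) =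
      ((Complex.exp (z * Complex.I) ^ 2)⁻¹) ^ m := by
    intro m
    rw [← Complex.exp_nat_mul, ← Complex.exp_neg, ← Complex.exp_nat_mul]; ring_nf
  have hn : Complex.exp (n * z * Complex.I) = Complex.exp (z * Complex.I) ^ n := by
    rw [← Complex.exp_nat_mul]; ring_nf
  have hgeom := geom_sum_mul ((Complex.exp (z * Complex.I) ^ 2)⁻¹) n
  rw [Complex.sin, Complex.sin, sum_congr rfl fun m _ => hpow m,
    show -((n - 1) * z * Complex.I) = -(n * z * Complex.I) + z * Complex.I by ring,
    Complex.exp_add, Complex.exp_neg, neg_mul, Complex.exp_neg, neg_mul, Complex.exp_neg,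
    mul_assoc, hn]
  have hE := Complex.exp_ne_zero (z * Complex.I)
  generalize Complex.exp (z * Complex.I) = E at *
  generalize ∑ m ∈ range n, ((E ^ 2)⁻¹) ^ m = S at *
  rw [inv_pow, ← pow_mul] at hgeom
  field_simp at hgeom ⊢
  linear_combination hgeom

theorem re_geom_sum_exp (x : ℝ) (n : ℕ) (hx : Real.sin (π * x) ≠ 0) :
    (∑ m ∈ range n, Complex.exp (-(2 * π * Complex.I * m * x))).re =
      Real.cos (π * x * (n - 1)) * Real.sin (π * x * n) / Real.sin (π * x) := by
  have hmul := geom_sum_exp_mul_sin (π * x) n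
  have hsin : Complex.sin (π * x) ≠ 0 := by exact_mod_cast hx
  have hterm : ∀ m : ℕ, Complex.exp (-(2 * π * Complex.I * m * x)) =
      Complex.exp (-(2 * m * (π * x) * Complex.I)) := fun m => by ring_nf
  rw [sum_congr rfl fun m _ => hterm m, eq_div_of_mul_eq hsin hmul,
    show -((n - 1) * (π * x) * Complex.I) = ((-(π * x * (n - 1)) : ℝ) : ℂ) * Complex.I by
      push_cast; ring,
    show (n : ℂ) * (π * x) = ((π * x * n : ℝ) : ℂ) by push_cast; ring]
  norm_cast
  rw [Complex.div_ofReal_re, Complex.re_mul_ofReal, Complex.exp_ofReal_mul_I_re, Real.cos_neg]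

theorem twoSidedSum_of_conj {n : ℕ} (hn : 0 < n) (T : ℤ → ℂ) (hT : ∀ j, T (-j) = conj (T j)) :
    twoSidedSum n T = 2 * ((∑ m ∈ range n, T m).re : ℂ) - T 0 := by
  have hT0 : conj (T 0) = T 0 := by simpa using (hT 0).symm
  have hsplit := sum_range_eq_add_Ico (fun m : ℕ => T m) hn
  simp only [Nat.cast_zero] at hsplit
  have hneg : ∑ m ∈ Ico 1 n, T (-m) = conj (∑ m ∈ range n, T m) - T 0 := by
    rw [hsplit, map_add, hT0, map_sum]
    simp only [hT, add_sub_cancel_left]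
  rw [twoSidedSum, hneg, ← add_sub_assoc, Complex.add_conj]
  push_cast
  ring

theorem twoSidedSum_exp_eq {n : ℕ} (hn : 0 < n) {x : ℝ} (hx : Real.sin (π * x) ≠ 0) :
    twoSidedSum n (fun j => Complex.exp (-(2 * π * Complex.I * j * x))) =
      ((2 * (Real.cos (π * x * (n - 1)) * Real.sin (π * x * n) / Real.sin (π * x)) - 1 : ℝ) :
        ℂ) := by
  have hconj (j : ℤ) : Complex.exp (-(2 * π * Complex.I * ((-j : ℤ) : ℂ) * x)) =
      conj (Complex.exp (-(2 * π * Complex.I * j * x))) := by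
    rw [← Complex.exp_conj]
    simp only [map_neg, map_mul, map_ofNat, Complex.conj_ofReal, Complex.conj_I, map_intCast,
      Int.cast_neg]
    ring_nf
  rw [twoSidedSum_of_conj hn _ hconj]
  simp only [Int.cast_natCast, Int.cast_zero, mul_zero, zero_mul, neg_zero, Complex.exp_zero]
  rw [re_geom_sum_exp x n hx]
  push_cast
  ring

theorem integral_two_mul_sub_one {f : ℝ → ℝ} {θ Δ : ℝ} (hΔ : Δ ≠ 0)
    (hf : IntervalIntegrable f volume (θ - Δ) (θ + Δ)) :
    1 / (2 * (Δ : ℂ)) * ∫ α in (θ - Δ)..(θ + Δ), ((2 * f α - 1 : ℝ) : ℂ) =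
      -1 + 1 / (Δ : ℂ) * ∫ α in (θ - Δ)..(θ + Δ), (f α : ℂ) := by
  rw [intervalIntegral.integral_ofReal, intervalIntegral.integral_ofReal,
    intervalIntegral.integral_sub (hf.const_mul 2) intervalIntegrable_const,
    intervalIntegral.integral_const_mul, intervalIntegral.integral_const, smul_eq_mul, mul_one]
  have hΔ' : (Δ : ℂ) ≠ 0 := Complex.ofReal_ne_zero.mpr hΔ
  push_cast
  field_simp
  ring

theorem stmt11_general (M : ℕ) (k : Fin M) (D θ Δ : ℝ) (hΔ : 0 < Δ)
    (r : ℤ → ℂ)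
    (hr : ∀ m : ℤ, r m = (1 / (2 * (Δ : ℂ))) *
      ∫ α in (θ - Δ)..(θ + Δ),
        Complex.exp (-(2 * (π : ℂ) * Complex.I * (D : ℂ) * (m : ℂ) * (Real.sin α : ℂ))))
    (c : ℕ → ℂ)
    (hc0 : c 0 = r 0)
    (hc : ∀ m : ℕ, 1 ≤ m → m ≤ M - 1 → c m = r m + r ((m : ℤ) - (M : ℤ)))
    (hsin : ∀ α ∈ Set.Icc (θ - Δ) (θ + Δ),
      Real.sin (π * (D * Real.sin α + (k.val : ℝ) / M)) ≠ 0) :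
    ∑ m ∈ Finset.range M,
        c m * Complex.exp (-(2 * (π : ℂ) * Complex.I * (m : ℂ) * (k.val : ℂ) / (M : ℂ)))
      = -1 + (1 / (Δ : ℂ)) * ∫ α in (θ - Δ)..(θ + Δ),
          ((Real.cos (π * (D * Real.sin α + (k.val : ℝ) / M) * ((M : ℝ) - 1)) *
            Real.sin (π * (D * Real.sin α + (k.val : ℝ) / M) * (M : ℝ)) /
            Real.sin (π * (D * Real.sin α + (k.val : ℝ) / M)) : ℝ) : ℂ) := by
  have hM : 0 < M := k.pos
  have hI : Set.uIcc (θ - Δ) (θ + Δ) = Set.Icc (θ - Δ) (θ + Δ) := Set.uIcc_of_le (by linarith)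
  have hterm (j : ℤ) : r j * Complex.exp (-(2 * π * Complex.I * j * k.val / M)) =
      1 / (2 * (Δ : ℂ)) * ∫ α in (θ - Δ)..(θ + Δ),
        Complex.exp (-(2 * π * Complex.I * j * ((D * Real.sin α + k.val / M : ℝ) : ℂ))) := by
    rw [hr, mul_assoc, ← intervalIntegral.integral_mul_const]
    congr 2 with α
    rw [← Complex.exp_add]
    push_cast
    ring_nf
  have hf : ContinuousOn (fun α => Real.cos (π * (D * Real.sin α + k.val / M) * (M - 1)) *
      Real.sin (π * (D * Real.sin α + k.val / M) * M) / Real.sin (π * (D * Real.sin α + k.val / M)))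
      (Set.uIcc (θ - Δ) (θ + Δ)) :=
    ContinuousOn.div (by fun_prop) (by fun_prop) (hI ▸ hsin)
  have hcirc := sum_mul_eq_twoSidedSum_of_periodic hM r c hc0 hc _
    (periodic_exp_mul_div hM.ne' k.val)
  simp only [Int.cast_natCast] at hcirc
  rw [hcirc, funext hterm, twoSidedSum_const_mul, twoSidedSum_integral _ _
      fun j => (by fun_prop : Continuous _).intervalIntegrable _ _,
    intervalIntegral.integral_congr fun α hα => twoSidedSum_exp_eq hM (hsin α (hI ▸ hα)),
    integral_two_mul_sub_one hΔ.ne' hf.intervalIntegrable]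

theorem stmt11 (M : ℕ) (hM : 0 < M) (k : Fin M) (D θ Δ : ℝ) (hΔ : 0 < Δ) (hD : 0 < D)
    (r : ℤ → ℂ)
    (hr : ∀ m : ℤ, r m = (1 / (2 * (Δ : ℂ))) *
      ∫ α in (θ - Δ)..(θ + Δ),
        Complex.exp (-(2 * (π : ℂ) * Complex.I * (D : ℂ) * (m : ℂ) * (Real.sin α : ℂ))))
    (c : ℕ → ℂ)
    (hc0 : c 0 = r 0)
    (hc : ∀ m : ℕ, 1 ≤ m → m ≤ M - 1 → c m = r m + r ((m : ℤ) - (M : ℤ)))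
    (hsin : ∀ α ∈ Set.Icc (θ - Δ) (θ + Δ),
      Real.sin (π * (D * Real.sin α + (k.val : ℝ) / M)) ≠ 0) :
    ∑ m ∈ Finset.range M,
        c m * Complex.exp (-(2 * (π : ℂ) * Complex.I * (m : ℂ) * (k.val : ℂ) / (M : ℂ)))
      = -1 + (1 / (Δ : ℂ)) * ∫ α in (θ - Δ)..(θ + Δ),
          ((Real.cos (π * (D * Real.sin α + (k.val : ℝ) / M) * ((M : ℝ) - 1)) *
            Real.sin (π * (D * Real.sin α + (k.val : ℝ) / M) * (M : ℝ)) /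
            Real.sin (π * (D * Real.sin α + (k.val : ℝ) / M)) : ℝ) : ℂ) :=
  stmt11_general M k D θ Δ hΔ r hr c hc0 hc hsin
end
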